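/- Let B be a real m × n matrix and α > 0 a real number, and let ω be a standard Gaussian random vector in ℝⁿ (its law is the product of n copies of the standard normal distribution N(0,1)). Then the probability that ‖B ω‖ < ‖B‖ / (α·√(2/π)) is at most α^{−1}, where ‖B‖ denotes the ℓ²→ℓ² operator norm of B and ‖·‖ the Euclidean norm on ℝᵐ. -/

import Mathlib

/-!
Pick a norming functional `φ` for the operator `L` of `B`: `‖φ‖ = ‖L‖` and `|φ y| ≤ ‖L y‖`
(compose a Hahn–Banach functional with `L` at a vector where `L` attains its norm). Under the
standard Gaussian measure `φ ω` is `N(0, ‖φ‖²)`, so `‖L ω‖ < ‖L‖ t` forces `φ ω` into an interval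
of length `2‖φ‖t`, which has probability at most `2t/√(2π) = t √(2/π)` because the density of
`N(0, σ²)` is bounded by `1/(σ√(2π))`. Take `t = (α √(2/π))⁻¹`.
-/

open MeasureTheory ProbabilityTheory
open scoped ENNReal NNReal

namespace ContinuousLinearMap

variable {𝕜 E F : Type*} [RCLike 𝕜] [NormedAddCommGroup E] [NormedSpace 𝕜 E] [ProperSpace E]
  [NormedAddCommGroup F] [NormedSpace 𝕜 F]

theorem exists_norm_le_one_norm_apply_eq_opNorm (f : E →L[𝕜] F) :
    ∃ x, ‖x‖ ≤ 1 ∧ ‖f x‖ = ‖f‖ := by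
  have hmem := ((ProperSpace.isCompact_closedBall (0 : E) 1).image f.continuous.norm).sSup_mem
    ((Metric.nonempty_closedBall.2 zero_le_one).image _)
  rw [f.sSup_unitClosedBall_eq_norm] at hmem
  obtain ⟨x, hx, hfx⟩ := hmem
  exact ⟨x, mem_closedBall_zero_iff.1 hx, hfx⟩

theorem exists_strongDual_norm_eq_opNorm (f : E →L[𝕜] F) :
    ∃ φ : StrongDual 𝕜 E, ‖φ‖ = ‖f‖ ∧ ∀ y, ‖φ y‖ ≤ ‖f y‖ := by
  obtain ⟨x, hx, hfx⟩ := f.exists_norm_le_one_norm_apply_eq_opNorm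
  obtain ⟨g, hg, hgx⟩ := exists_dual_vector'' 𝕜 (f x)
  refine ⟨g.comp f, le_antisymm ?_ ?_, fun y => ?_⟩
  · exact (opNorm_comp_le g f).trans (mul_le_of_le_one_left (norm_nonneg _) hg)
  · calc ‖f‖ = ‖g.comp f x‖ := by simp [hgx, hfx]
      _ ≤ ‖g.comp f‖ := (g.comp f).unit_le_opNorm x hx
  · exact (g.le_opNorm _).trans (mul_le_of_le_one_left (norm_nonneg _) hg)

end ContinuousLinearMap

theorem gaussianPDFReal_le (μ : ℝ) (v : ℝ≥0) (x : ℝ) :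
    gaussianPDFReal μ v x ≤ (√(2 * Real.pi * v))⁻¹ := by
  rw [gaussianPDFReal]
  refine mul_le_of_le_one_right (by positivity) (Real.exp_le_one_iff.2 ?_)
  exact div_nonpos_of_nonpos_of_nonneg (neg_nonpos.2 (sq_nonneg _)) (by positivity)

theorem gaussianReal_le_ofReal_mul_volume (μ : ℝ) {v : ℝ≥0} (hv : v ≠ 0) (s : Set ℝ) :
    gaussianReal μ v s ≤ ENNReal.ofReal (√(2 * Real.pi * v))⁻¹ * volume s := by
  rw [gaussianReal_apply μ hv, ← setLIntegral_const]
  exact lintegral_mono fun x => ENNReal.ofReal_le_ofReal (gaussianPDFReal_le μ v x)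

theorem gaussianReal_abs_lt_mul_le (σ : ℝ≥0) (t : ℝ) :
    gaussianReal 0 (σ ^ 2) {x | |x| < σ * t} ≤ ENNReal.ofReal (t * √(2 / Real.pi)) := by
  rcases eq_or_ne σ 0 with rfl | hσ
  · simp
  have hσ_pos : (0 : ℝ) < σ := by positivity
  have hsqrt : √(2 / Real.pi) * √(2 * Real.pi) = 2 := by
    rw [← Real.sqrt_mul (by positivity),
      show 2 / Real.pi * (2 * Real.pi) = 2 ^ 2 by field_simp, Real.sqrt_sq zero_le_two]
  have hinterval : {x : ℝ | |x| < σ * t} = Set.Ioo (-(σ * t)) (σ * t) := by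
    ext
    simp [abs_lt]
  calc gaussianReal 0 (σ ^ 2) {x | |x| < σ * t}
      ≤ ENNReal.ofReal (√(2 * Real.pi * (σ ^ 2 : ℝ≥0)))⁻¹ * volume {x : ℝ | |x| < σ * t} :=
        gaussianReal_le_ofReal_mul_volume 0 (pow_ne_zero 2 hσ) _
    _ = ENNReal.ofReal (t * √(2 / Real.pi)) := by
        rw [hinterval, Real.volume_Ioo, ← ENNReal.ofReal_mul (by positivity)]
        congr 1
        rw [NNReal.coe_pow, Real.sqrt_mul (by positivity), Real.sqrt_sq hσ_pos.le]
        field_simp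
        linear_combination (-t) * hsqrt

section stdGaussian

variable {E : Type*} [NormedAddCommGroup E] [InnerProductSpace ℝ E] [FiniteDimensional ℝ E]
  [MeasurableSpace E] [BorelSpace E]

theorem stdGaussian_map_strongDual (φ : StrongDual ℝ E) :
    (stdGaussian E).map φ = gaussianReal 0 (‖φ‖₊ ^ 2) := by
  rw [IsGaussian.map_eq_gaussianReal, integral_strongDual_stdGaussian, variance_dual_stdGaussian]
  congr
  ext
  simp

theorem stdGaussian_norm_lt_opNorm_mul_le {F : Type*} [NormedAddCommGroup F] [NormedSpace ℝ F]
    (L : E →L[ℝ] F) (t : ℝ) :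
    stdGaussian E {ω | ‖L ω‖ < ‖L‖ * t} ≤ ENNReal.ofReal (t * √(2 / Real.pi)) := by
  obtain ⟨φ, hφ, hφL⟩ := L.exists_strongDual_norm_eq_opNorm
  calc stdGaussian E {ω | ‖L ω‖ < ‖L‖ * t}
      ≤ stdGaussian E (φ ⁻¹' {x | |x| < ‖φ‖₊ * t}) := by
        refine measure_mono fun ω hω => ?_
        simp only [Set.mem_preimage, Set.mem_ofPred_eq, coe_nnnorm, hφ, ← Real.norm_eq_abs]
        exact (hφL ω).trans_lt hω
    _ ≤ (stdGaussian E).map φ {x | |x| < ‖φ‖₊ * t} := Measure.le_map_apply (by fun_prop) _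
    _ ≤ ENNReal.ofReal (t * √(2 / Real.pi)) := by
        rw [stdGaussian_map_strongDual]
        exact gaussianReal_abs_lt_mul_le _ t

end stdGaussian

theorem randomized_norm_estimate_single_general
    {m n : ℕ} (B : Matrix (Fin m) (Fin n) ℝ) (α : ℝ) :
    (Measure.pi fun _ : Fin n => gaussianReal 0 1)
      {ω : Fin n → ℝ |
        ‖(EuclideanSpace.equiv (Fin m) ℝ).symm (B.mulVec ω)‖ <
          ‖LinearMap.toContinuousLinearMap (Matrix.toEuclideanLin B)‖ /
            (α * Real.sqrt (2 / Real.pi))} ≤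
      ENNReal.ofReal α⁻¹ := by
  set L := LinearMap.toContinuousLinearMap (Matrix.toEuclideanLin B)
  set c := √(2 / Real.pi)
  have hc : 0 < c := Real.sqrt_pos.2 (by positivity)
  calc _ ≤ (Measure.pi fun _ : Fin n => gaussianReal 0 1).map (WithLp.toLp 2)
          {x | ‖L x‖ < ‖L‖ * (α * c)⁻¹} := by
        simp only [← div_eq_mul_inv]
        exact Measure.le_map_apply (by fun_prop) _
    _ = stdGaussian (EuclideanSpace ℝ (Fin n)) {x | ‖L x‖ < ‖L‖ * (α * c)⁻¹} := by
        rw [map_pi_eq_stdGaussian]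
    _ ≤ ENNReal.ofReal ((α * c)⁻¹ * c) := stdGaussian_norm_lt_opNorm_mul_le L _
    _ = ENNReal.ofReal α⁻¹ := by field_simp

/-- Single-sample randomized norm estimate: for a real `m × n` matrix `B`, a standard
Gaussian vector `ω` in `ℝⁿ` (law the product of `n` copies of `N(0,1)`), and `α > 0`,
the probability that `‖B ω‖ < ‖B‖ / (α·√(2/π))` is at most `α⁻¹`, where `‖B‖` is the
`ℓ² → ℓ²` operator norm and `‖·‖` the Euclidean norm on `ℝᵐ`. -/
theorem randomized_norm_estimate_single
    {m n : ℕ} (B : Matrix (Fin m) (Fin n) ℝ) (α : ℝ) (hα : 0 < α) :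
    (Measure.pi fun _ : Fin n => gaussianReal 0 1)
      {ω : Fin n → ℝ |
        ‖(EuclideanSpace.equiv (Fin m) ℝ).symm (B.mulVec ω)‖ <
          ‖LinearMap.toContinuousLinearMap (Matrix.toEuclideanLin B)‖ /
            (α * Real.sqrt (2 / Real.pi))} ≤
      ENNReal.ofReal α⁻¹ :=
  randomized_norm_estimate_single_general B α
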